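/- Let 𝒜 be an abelian category with enough projective objects and let 0 → M → X⁰ → X¹ → ⋯ → Xⁿ → 0 be an exact sequence in 𝒜 with n ≥ 0. Then there exist, for each 0 ≤ i ≤ n, an i-th syzygy Ω^i(X^i) of X^i such that M ∈ [Ωⁿ(Xⁿ)]₁ • [Ω^{n-1}(X^{n-1})]₁ • ⋯ • [Ω¹(X¹)]₁ • [X⁰]₁ ⊆ [⊕_{i=0}^{n} Ω^i(X^i)]_{n+1}. -/

import Mathlib

/-!
Cut the sequence into short exact sequences `0 → Cʲ → Xʲ → Cʲ⁺¹ → 0` (`C⁰ = M`, `Cⁿ = Xⁿ`) and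
go from right to left, keeping for each `j` a genuine filtration of `Cʲ ⊕ P`, `P` projective,
with subquotients `Ωⁿ⁻ʲ(Xⁿ), …, Ω¹(Xʲ⁺¹), Xʲ`. The horseshoe lemma (the snake lemma for a
morphism of short exact sequences) filters a syzygy of `Cʲ⁺¹ ⊕ P'` by syzygies of the pieces;
restricted to `Cʲ⁺¹` it is a syzygy `0 → B → E → Cʲ⁺¹ → 0` with `E` projective, and its
pullback along `Xʲ → Cʲ⁺¹` is an extension of `Xʲ` by `B` isomorphic to `Cʲ ⊕ E`. For `j = 0`
the filtration puts `M ⊕ P`, hence its summand `M`, in `[Ωⁿ(Xⁿ)]₁ • ⋯ • [X⁰]₁`; each piece is a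
summand of `⊕ᵢ Ωⁱ(Xⁱ)`, which gives the inclusion in `[⊕ᵢ Ωⁱ(Xⁱ)]ₙ₊₁`.
-/

open CategoryTheory Limits

attribute [local instance] CategoryTheory.Limits.HasFiniteBiproducts.of_hasFiniteProducts

noncomputable section

universe v u

variable {C : Type u} [Category.{v} C] [Abelian C]

/-- `add 𝒰`: the class of direct summands of finite direct sums of objects of `𝒰`. -/
def addClosure (S : Set C) : Set C :=
  {X | ∃ (n : ℕ) (g : Fin n → C), (∀ k, g k ∈ S) ∧
    ∃ (s : X ⟶ ⨁ g) (p : (⨁ g) ⟶ X), s ≫ p = 𝟙 X}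

/-- The operation `𝒰₁ • 𝒰₂`. -/
def bulletOp (S T : Set C) : Set C :=
  addClosure {X | ∃ (U V : C) (_ : U ∈ S) (_ : V ∈ T) (f : U ⟶ X) (g : X ⟶ V)
    (w : f ≫ g = 0), (ShortComplex.mk f g w).ShortExact}

/-- `[T]_n`. -/
def bracket (T : C) : ℕ → Set C
  | 0 => {X | IsZero X}
  | n + 1 => bulletOp (addClosure {T}) (bracket T n)

/-- The iterated product `f n • f (n-1) • ⋯ • f 0`. -/
def bigBullet (f : ℕ → Set C) : ℕ → Set C
  | 0 => f 0
  | n + 1 => bulletOp (f (n + 1)) (bigBullet f n)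

/-- `K` is a syzygy of `X`. -/
def IsSyzygy (K X : C) : Prop :=
  ∃ (P : C) (ι : K ⟶ P) (π : P ⟶ X) (w : ι ≫ π = 0),
    Projective P ∧ (ShortComplex.mk ι π w).ShortExact

/-- `K` is an `i`-th syzygy of `X` (a `0`-th syzygy of `X` is `X` itself). -/
def IsNthSyzygy : ℕ → C → C → Prop
  | 0, K, X => K = X
  | n + 1, K, X => ∃ Y : C, IsNthSyzygy n Y X ∧ IsSyzygy K Y

/-- `0 → X N → ⋯ → X 0 → 0` is exact. -/
def IsExactSeq (N : ℕ) (X : ℕ → C) (d : ∀ n : ℕ, X (n + 1) ⟶ X n) : Prop :=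
  Mono (d (N - 1)) ∧ Epi (d 0) ∧
    ∀ i : ℕ, i + 2 ≤ N →
      ∃ w : d (i + 1) ≫ d i = 0, (ShortComplex.mk (d (i + 1)) (d i) w).Exact

open ZeroObject

section ShortExactSequences

variable {X₁ X₂ X₃ : C}

lemma shortExact_of_lift {f : X₁ ⟶ X₂} {g : X₂ ⟶ X₃} {w : f ≫ g = 0} [Mono f] [Epi g]
    (lift : ∀ {A : C} (x : A ⟶ X₂), x ≫ g = 0 → ∃ l : A ⟶ X₁, l ≫ f = x) :
    (ShortComplex.mk f g w).ShortExact :=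
  .mk' ((ShortComplex.mk f g w).exact_of_f_is_kernel
    (KernelFork.IsLimit.ofι' f w fun x hx => ⟨_, (lift x hx).choose_spec⟩)) ‹_› ‹_›

lemma shortExact_kernel_ι (g : X₂ ⟶ X₃) [Epi g] :
    (ShortComplex.mk (kernel.ι g) g (kernel.condition g)).ShortExact :=
  shortExact_of_lift fun x hx => ⟨kernel.lift g x hx, kernel.lift_ι g x hx⟩

lemma CategoryTheory.ShortComplex.ShortExact.isoComp_compIso {S : ShortComplex C}
    (hS : S.ShortExact) (e₁ : X₁ ≅ S.X₁) (e₃ : S.X₃ ≅ X₃) :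
    (ShortComplex.mk (e₁.hom ≫ S.f) (S.g ≫ e₃.hom) (by simp)).ShortExact :=
  ShortComplex.shortExact_of_iso (ShortComplex.isoMk e₁.symm (Iso.refl _) e₃) hS

lemma shortExact_cokernel_π (f : X₁ ⟶ X₂) [Mono f] :
    (ShortComplex.mk f (cokernel.π f) (cokernel.condition f)).ShortExact :=
  .mk' (ShortComplex.exact_of_g_is_cokernel _ (cokernelIsCokernel f)) ‹_› inferInstance

def snakeInputOfShortExact {S₁ S₂ : ShortComplex C} (φ : S₁ ⟶ S₂) (h₁ : S₁.ShortExact)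
    (h₂ : S₂.ShortExact) : ShortComplex.SnakeInput C where
  L₀ := ShortComplex.mk (kernel.map φ.τ₁ φ.τ₂ S₁.f S₂.f φ.comm₁₂)
    (kernel.map φ.τ₂ φ.τ₃ S₁.g S₂.g φ.comm₂₃) (by ext; simp)
  L₁ := S₁
  L₂ := S₂
  L₃ := ShortComplex.mk (cokernel.map φ.τ₁ φ.τ₂ S₁.f S₂.f φ.comm₁₂)
    (cokernel.map φ.τ₂ φ.τ₃ S₁.g S₂.g φ.comm₂₃) (by ext; simp)
  v₀₁ := { τ₁ := kernel.ι φ.τ₁, τ₂ := kernel.ι φ.τ₂, τ₃ := kernel.ι φ.τ₃ }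
  v₁₂ := φ
  v₂₃ := { τ₁ := cokernel.π φ.τ₁, τ₂ := cokernel.π φ.τ₂, τ₃ := cokernel.π φ.τ₃ }
  h₀ := by
    apply ShortComplex.isLimitOfIsLimitπ <;>
      exact (KernelFork.isLimitMapConeEquiv _ _).2 (kernelIsKernel _)
  h₃ := by
    apply ShortComplex.isColimitOfIsColimitπ <;>
      exact (CokernelCofork.isColimitMapCoconeEquiv _ _).2 (cokernelIsCokernel _)
  L₁_exact := h₁.exact
  epi_L₁_g := h₁.epi_g
  L₂_exact := h₂.exact
  mono_L₂_f := h₂.mono_f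

lemma shortExact_kernel_map {S₁ S₂ : ShortComplex C} (φ : S₁ ⟶ S₂) (h₁ : S₁.ShortExact)
    (h₂ : S₂.ShortExact) [Epi φ.τ₁] :
    (ShortComplex.mk (kernel.map φ.τ₁ φ.τ₂ S₁.f S₂.f φ.comm₁₂)
      (kernel.map φ.τ₂ φ.τ₃ S₁.g S₂.g φ.comm₂₃) (by ext; simp)).ShortExact := by
  let D := snakeInputOfShortExact φ h₁ h₂
  have : Mono D.L₁.f := h₁.mono_f
  exact @ShortComplex.ShortExact.mk' _ _ _ _ D.L₀_exact D.mono_L₀_f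
    (D.L₁'_exact.epi_f ((isZero_cokernel_of_epi φ.τ₁).eq_of_tgt _ _))

lemma shortExact_cokernel_map {S₁ S₂ : ShortComplex C} (φ : S₁ ⟶ S₂) (h₁ : S₁.ShortExact)
    (h₂ : S₂.ShortExact) [Mono φ.τ₃] :
    (ShortComplex.mk (cokernel.map φ.τ₁ φ.τ₂ S₁.f S₂.f φ.comm₁₂)
      (cokernel.map φ.τ₂ φ.τ₃ S₁.g S₂.g φ.comm₂₃) (by ext; simp)).ShortExact := by
  let D := snakeInputOfShortExact φ h₁ h₂
  have : Epi D.L₂.g := h₂.epi_g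
  exact @ShortComplex.ShortExact.mk' _ _ _ _ D.L₃_exact
    (D.L₂'_exact.mono_g ((isZero_kernel_of_mono φ.τ₃).eq_of_src _ _)) D.epi_L₃_g

lemma shortExact_id_zero (X : C) : (ShortComplex.mk (𝟙 X) (0 : X ⟶ 0) comp_zero).ShortExact :=
  (ShortComplex.Splitting.ofIsIsoOfIsZero _ (inferInstanceAs (IsIso (𝟙 X)))
    (isZero_zero C)).shortExact

lemma shortExact_of_isPullback {P Y Q Z K : C} {a : P ⟶ Y} {b : P ⟶ Q} {f : Y ⟶ Z}
    {q : Q ⟶ Z} (sq : IsPullback a b f q) {k : K ⟶ Q} {w : k ≫ q = 0}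
    (hS : (ShortComplex.mk k q w).ShortExact) :
    ∃ (k' : K ⟶ P) (w' : k' ≫ a = 0), (ShortComplex.mk k' a w').ShortExact := by
  have := hS.mono_f
  have := hS.epi_g
  let k' := sq.lift 0 k (by simp [w])
  have hk' : k' ≫ b = k := sq.lift_snd _ _ _
  have : Mono k' := mono_of_mono_fac hk'
  have : Epi a := Abelian.epi_fst_of_isLimit f q sq.isLimit
  refine ⟨k', sq.lift_fst _ _ _, shortExact_of_lift fun x hx => ?_⟩
  have hxb : (x ≫ b) ≫ q = 0 := by rw [Category.assoc, ← sq.w, reassoc_of% hx, zero_comp]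
  refine ⟨hS.exact.lift _ hxb, sq.hom_ext ?_ ?_⟩
  · simp [k', hx]
  · simp only [Category.assoc, hk']
    exact hS.exact.lift_f _ hxb

lemma projective_pullback_inl {K P Q : C} [Projective P] [Projective Q] (e : Q ⟶ K ⊞ P)
    [Epi e] : Projective (pullback biprod.inl e) := by
  let s : P ⟶ Q := Projective.factorThru (𝟙 P) (e ≫ biprod.snd)
  have hs : s ≫ e ≫ biprod.snd = 𝟙 P := Projective.factorThru_comp _ _
  -- `p` projects `Q` onto the kernel of the split epimorphism `e ≫ biprod.snd`, which is the
  -- pullback.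
  let p : Q ⟶ Q := 𝟙 Q - e ≫ biprod.snd ≫ s
  have hp : (p ≫ e ≫ biprod.fst) ≫ biprod.inl = p ≫ e := by
    ext <;> simp [p, hs]
  have hsp : pullback.snd biprod.inl e ≫ p = pullback.snd biprod.inl e := by
    simp [p, ← pullback.condition_assoc]
  have hr : pullback.snd biprod.inl e ≫ pullback.lift _ p hp = 𝟙 _ := by
    apply pullback.hom_ext
    · rw [Category.assoc, pullback.lift_fst, reassoc_of% hsp, ← pullback.condition_assoc]
      simp
    · rw [Category.assoc, pullback.lift_snd, hsp, Category.id_comp]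
  exact Retract.projective ⟨_, _, hr⟩

lemma horseshoe {G A A' Q Q' : C} {u : G ⟶ A} {v : A ⟶ A'} {w : u ≫ v = 0}
    (hS : (ShortComplex.mk u v w).ShortExact) (q : Q ⟶ G) [Epi q] (q' : Q' ⟶ A') [Epi q']
    [Projective Q'] :
    ∃ (e : Q ⊞ Q' ⟶ A) (_ : Epi e) (f : kernel q ⟶ kernel e) (g : kernel e ⟶ kernel q')
      (w : f ≫ g = 0), (ShortComplex.mk f g w).ShortExact := by
  have := hS.epi_g
  let φ : ShortComplex.mk (biprod.inl : Q ⟶ Q ⊞ Q') biprod.snd biprod.inl_snd ⟶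
      ShortComplex.mk u v w :=
    { τ₁ := q
      τ₂ := biprod.desc (q ≫ u) (Projective.factorThru q' v)
      τ₃ := q'
      comm₁₂ := by simp
      comm₂₃ := by ext <;> simp [w] }
  have h₁ := (ShortComplex.Splitting.ofHasBinaryBiproduct Q Q').shortExact
  have : Epi φ.τ₂ := ShortComplex.epi_τ₂_of_exact_of_epi φ hS.exact
  exact ⟨φ.τ₂, this, _, _, _, shortExact_kernel_map φ h₁ hS⟩

/-- The third isomorphism theorem `(D / U) / (S / U) ≅ D / S`. -/
lemma exists_shortExact_cokernel_comp {U S S' D T : C} {a : U ⟶ S} {e : S ⟶ S'}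
    {wa : a ≫ e = 0} (ha : (ShortComplex.mk a e wa).ShortExact) {b : S ⟶ D} {t : D ⟶ T}
    {wb : b ≫ t = 0} (hb : (ShortComplex.mk b t wb).ShortExact) :
    ∃ (c : S' ⟶ cokernel (a ≫ b)) (t' : cokernel (a ≫ b) ⟶ T) (w : c ≫ t' = 0),
      (ShortComplex.mk c t' w).ShortExact := by
  let φ : ShortComplex.mk (𝟙 U) (0 : U ⟶ 0) comp_zero ⟶ ShortComplex.mk b t wb :=
    { τ₁ := a, τ₂ := a ≫ b, τ₃ := 0 }
  have hφ := shortExact_cokernel_map φ (shortExact_id_zero U) hb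
  exact ⟨_, _, _, hφ.isoComp_compIso
    (ha.gIsCokernel.coconePointUniqueUpToIso (colimit.isColimit _)) cokernelZeroIsoTarget⟩

end ShortExactSequences

section AddClosure

variable {S T : Set C} {X Y : C}

lemma mem_addClosure_of_mem (h : X ∈ S) : X ∈ addClosure S :=
  ⟨1, fun _ => X, fun _ => h, biproduct.lift fun _ => 𝟙 X, biproduct.π _ 0, by simp⟩

lemma mem_addClosure_of_retract (r : Retract Y X) (hX : X ∈ addClosure S) :
    Y ∈ addClosure S := by
  obtain ⟨n, g, hg, s, p, hsp⟩ := hX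
  exact ⟨n, g, hg, r.i ≫ s, p ≫ r.r, by simp [reassoc_of% hsp]⟩

lemma addClosure_mono (h : S ⊆ T) : addClosure S ⊆ addClosure T := by
  rintro X ⟨n, g, hg, s, p, hsp⟩
  exact ⟨n, g, fun k => h (hg k), s, p, hsp⟩

lemma addClosure_addClosure_subset : addClosure (addClosure S) ⊆ addClosure S := by
  rintro X ⟨m, g, hg, s, p, hsp⟩
  choose r h hh s' p' hsp' using hg
  let e := Fintype.equivFin (Σ k : Fin m, Fin (r k))
  let Φ : (⨁ fun k => ⨁ fun x => h k x) ≅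
      ⨁ fun j : Fin (Fintype.card (Σ k : Fin m, Fin (r k))) => h (e.symm j).1 (e.symm j).2 :=
    biproductBiproductIso (fun k => Fin (r k)) (fun k x => h k x) ≪≫
      biproduct.whiskerEquiv e fun _ => eqToIso (by rw [Equiv.symm_apply_apply])
  have hmap : biproduct.map s' ≫ biproduct.map p' = 𝟙 (⨁ g) := by
    ext j
    simp [hsp']
  refine ⟨_, _, fun j => hh _ _, s ≫ biproduct.map s' ≫ Φ.hom, Φ.inv ≫ biproduct.map p' ≫ p, ?_⟩
  simp [reassoc_of% hmap, hsp]

lemma addClosure_subset (h : S ⊆ addClosure T) : addClosure S ⊆ addClosure T :=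
  (addClosure_mono h).trans addClosure_addClosure_subset

lemma bulletOp_mono {S' T' : Set C} (hS : S ⊆ S') (hT : T ⊆ T') :
    bulletOp S T ⊆ bulletOp S' T' := by
  apply addClosure_mono
  rintro X ⟨U, V, hU, hV, f, g, w, hfg⟩
  exact ⟨U, V, hS hU, hT hV, f, g, w, hfg⟩

lemma mem_bulletOp_of_shortExact {U V : C} {f : U ⟶ X} {g : X ⟶ V} {w : f ≫ g = 0}
    (hfg : (ShortComplex.mk f g w).ShortExact) (hU : U ∈ S) (hV : V ∈ T) :
    X ∈ bulletOp S T :=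
  mem_addClosure_of_mem ⟨U, V, hU, hV, f, g, w, hfg⟩

end AddClosure

lemma bracket_one (T : C) : bracket T 1 = addClosure {T} := by
  apply subset_antisymm
  · refine addClosure_subset ?_
    rintro X ⟨U, V, hU, hV, f, g, w, hfg⟩
    have : IsIso f := (hfg.isIso_f_iff).2 hV
    exact mem_addClosure_of_retract (Retract.ofIso (asIso f).symm) hU
  · intro X hX
    exact mem_bulletOp_of_shortExact (shortExact_id_zero X) hX (isZero_zero C)

lemma self_mem_bracket_one (T : C) : T ∈ bracket T 1 := by
  rw [bracket_one]
  exact mem_addClosure_of_mem rfl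

lemma bracket_one_subset {X T : C} (h : X ∈ addClosure {T}) : bracket X 1 ⊆ addClosure {T} := by
  rw [bracket_one]
  exact addClosure_subset (Set.singleton_subset_iff.2 h)

section Filtration

/-- A filtration of `A` with subquotients `G k, …, G 1, G 0` from the bottom up: the shape of
`[G k]₁ • ⋯ • [G 0]₁`. -/
def HasFiltration (G : ℕ → C) : ℕ → C → Prop
  | 0, A => Nonempty (A ≅ G 0)
  | k + 1, A => ∃ (A' : C) (f : G (k + 1) ⟶ A) (g : A ⟶ A') (w : f ≫ g = 0),
      (ShortComplex.mk f g w).ShortExact ∧ HasFiltration G k A'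

variable {G : ℕ → C}

lemma HasFiltration.of_iso {k : ℕ} {A A' : C} (e : A' ≅ A) (h : HasFiltration G k A) :
    HasFiltration G k A' := by
  cases k with
  | zero =>
    obtain ⟨e'⟩ := h
    exact ⟨e ≪≫ e'⟩
  | succ k =>
    obtain ⟨B, f, g, w, hS, hF⟩ := h
    exact ⟨B, f ≫ e.inv, e.hom ≫ g, by simp [w], ShortComplex.shortExact_of_iso
      (S₁ := ShortComplex.mk f g w) (ShortComplex.isoMk (Iso.refl _) e.symm (Iso.refl _)) hS, hF⟩

lemma mem_bigBullet_of_hasFiltration :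
    ∀ {k : ℕ} {A : C}, HasFiltration G k A → A ∈ bigBullet (fun i => bracket (G i) 1) k
  | 0, _, ⟨e⟩ => by
    rw [bigBullet, bracket_one]
    exact mem_addClosure_of_retract (.ofIso e) (mem_addClosure_of_mem rfl)
  | _ + 1, _, ⟨_, _, _, _, hS, hF⟩ =>
    mem_bulletOp_of_shortExact hS (self_mem_bracket_one _) (mem_bigBullet_of_hasFiltration hF)

lemma mem_bigBullet_of_retract {k : ℕ} {A Y : C} (r : Retract Y A)
    (hA : A ∈ bigBullet (fun i => bracket (G i) 1) k) :
    Y ∈ bigBullet (fun i => bracket (G i) 1) k := by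
  cases k <;> exact mem_addClosure_of_retract r hA

lemma bigBullet_subset_bracket {T : C} :
    ∀ {k : ℕ}, (∀ i ≤ k, G i ∈ addClosure {T}) →
      bigBullet (fun i => bracket (G i) 1) k ⊆ bracket T (k + 1)
  | 0, h => by
    rw [bigBullet, bracket_one T]
    exact bracket_one_subset (h 0 le_rfl)
  | k + 1, h => bulletOp_mono (bracket_one_subset (h (k + 1) le_rfl))
      (bigBullet_subset_bracket fun i hi => h i (hi.trans k.le_succ))

lemma hasFiltration_of_shortExact :
    ∀ {k : ℕ} {S D : C} {b : S ⟶ D} {t : D ⟶ G 0} {w : b ≫ t = 0},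
      (ShortComplex.mk b t w).ShortExact → HasFiltration (fun i => G (i + 1)) k S →
      HasFiltration G (k + 1) D
  | 0, _, _, _, _, _, hS, ⟨e⟩ =>
    ⟨G 0, _, _, _, hS.isoComp_compIso e.symm (Iso.refl _), ⟨Iso.refl _⟩⟩
  | _ + 1, _, _, b, _, _, hS, ⟨_, a, _, _, ha, hF⟩ => by
    have := ha.mono_f
    have := hS.mono_f
    obtain ⟨_, _, _, hct⟩ := exists_shortExact_cokernel_comp ha hS
    exact ⟨_, a ≫ b, _, _, shortExact_cokernel_π _, hasFiltration_of_shortExact hct hF⟩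

end Filtration

section Syzygies

variable [EnoughProjectives C]

def syzygy (X : C) : C :=
  kernel (Projective.π X)

lemma isSyzygy_syzygy (X : C) : IsSyzygy (syzygy X) X :=
  ⟨_, _, _, _, Projective.projective_over X, shortExact_kernel_ι (Projective.π X)⟩

lemma exists_hasFiltration_syzygy_kernel {G : ℕ → C} :
    ∀ {k : ℕ} {A : C}, HasFiltration G k A →
      ∃ (Q : C) (e : Q ⟶ A), Projective Q ∧ Epi e ∧
        HasFiltration (fun i => syzygy (G i)) k (kernel e)
  | 0, _, ⟨φ⟩ => ⟨_, Projective.π (G 0) ≫ φ.inv, inferInstance, inferInstance,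
      ⟨kernelCompMono _ _⟩⟩
  | k + 1, _, ⟨_, _, _, _, hS, hF⟩ => by
    obtain ⟨Q, e, _, _, hQ⟩ := exists_hasFiltration_syzygy_kernel hF
    obtain ⟨e', he', f, g, w, hfg⟩ := horseshoe hS (Projective.π (G (k + 1))) e
    exact ⟨_, e', inferInstance, he', _, f, g, w, hfg, hQ⟩

def consSyzygies (X : C) (G : ℕ → C) : ℕ → C
  | 0 => X
  | i + 1 => syzygy (G i)

/-- Dimension shifting: pulling a syzygy `0 → B → E → K → 0` back along `X ⟶ K` gives an
extension of `X` by `B` that is isomorphic to `M ⊞ E`. -/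
theorem exists_hasFiltration_of_shortExact {M X K P' : C} [Projective P'] {f : M ⟶ X}
    {g : X ⟶ K} {w : f ≫ g = 0} (hS : (ShortComplex.mk f g w).ShortExact) {G : ℕ → C}
    {k : ℕ} (hF : HasFiltration G k (K ⊞ P')) :
    ∃ P, Projective P ∧ HasFiltration (consSyzygies X G) (k + 1) (M ⊞ P) := by
  obtain ⟨Q, e, _, _, hB⟩ := exists_hasFiltration_syzygy_kernel hF
  have hE : Projective (pullback biprod.inl e) := projective_pullback_inl e
  obtain ⟨_, _, hBE⟩ :=
    shortExact_of_isPullback (IsPullback.of_hasPullback biprod.inl e) (shortExact_kernel_ι e)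
  have sq := IsPullback.of_hasPullback g (pullback.fst biprod.inl e)
  obtain ⟨_, _, hBD⟩ := shortExact_of_isPullback sq hBE
  obtain ⟨_, _, hMD⟩ := shortExact_of_isPullback sq.flip hS
  exact ⟨_, hE, (hasFiltration_of_shortExact hBD hB).of_iso
    (hMD.splittingOfProjective.isoBinaryBiproduct).symm⟩

end Syzygies

section ExactSequences

variable {Y : ℕ → C}

/-- The object `C` making `0 → C → Y k → Y (k - 1) → ⋯ → Y 0 → 0` exact. -/
abbrev seqCycles (d : ∀ k, Y (k + 1) ⟶ Y k) : ℕ → C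
  | 0 => Y 0
  | k + 1 => kernel (d k)

lemma exists_shortExact_seqCycles {n : ℕ} {d : ∀ k, Y (k + 1) ⟶ Y k}
    (h : IsExactSeq (n + 1) Y d) :
    ∀ {k : ℕ}, k ≤ n → ∃ (g : Y (k + 1) ⟶ seqCycles d k) (w : kernel.ι (d k) ≫ g = 0),
      (ShortComplex.mk (kernel.ι (d k)) g w).ShortExact
  | 0, _ => by
    have := h.2.1
    exact ⟨d 0, _, shortExact_kernel_ι (d 0)⟩
  | m + 1, hm => by
    obtain ⟨w, hex⟩ := h.2.2 m (by omega)
    let g : Y (m + 2) ⟶ kernel (d m) := kernel.lift (d m) (d (m + 1)) w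
    have : Epi g := hex.epi_kernelLift
    have hg : kernel.ι (d (m + 1)) ≫ g = 0 := by ext; simp [g]
    refine ⟨g, hg, shortExact_of_lift fun x hx => ?_⟩
    have : x ≫ d (m + 1) = 0 := by simpa [g] using hx =≫ kernel.ι (d m)
    exact ⟨kernel.lift _ x this, kernel.lift_ι _ _ _⟩

lemma exists_hasFiltration_seqCycles [EnoughProjectives C] {n : ℕ}
    {d : ∀ k, Y (k + 1) ⟶ Y k} (h : IsExactSeq (n + 1) Y d) :
    ∀ {k : ℕ}, k ≤ n → ∃ Ω : ℕ → C, (∀ i ≤ k, IsNthSyzygy i (Ω i) (Y (k - i))) ∧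
      ∃ P, Projective P ∧ HasFiltration Ω k (seqCycles d k ⊞ P)
  | 0, _ => ⟨fun _ => Y 0, fun i hi => by obtain rfl := Nat.le_zero.1 hi; rfl, 0, inferInstance,
      ⟨(isoBiprodZero (isZero_zero C)).symm⟩⟩
  | k + 1, hk => by
    obtain ⟨Ω, hΩ, P, _, hF⟩ := exists_hasFiltration_seqCycles h (k := k) (by omega)
    obtain ⟨g, w, hS⟩ := exists_shortExact_seqCycles h (k := k) (by omega)
    obtain ⟨Q, hQ, hF'⟩ := exists_hasFiltration_of_shortExact hS hF
    refine ⟨consSyzygies (Y (k + 1)) Ω, ?_, Q, hQ, hF'⟩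
    rintro (_ | i) hi
    · rfl
    · rw [Nat.add_sub_add_right]
      exact ⟨Ω i, hΩ i (by omega), isSyzygy_syzygy _⟩

theorem exists_hasFiltration_of_isExactSeq [EnoughProjectives C] {n : ℕ}
    {d : ∀ k, Y (k + 1) ⟶ Y k} (h : IsExactSeq (n + 1) Y d) :
    ∃ Ω : ℕ → C, (∀ i ≤ n, IsNthSyzygy i (Ω i) (Y (n - i))) ∧
      ∃ P, Projective P ∧ HasFiltration Ω n (Y (n + 1) ⊞ P) := by
  obtain ⟨Ω, hΩ, P, hP, hF⟩ := exists_hasFiltration_seqCycles h le_rfl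
  obtain ⟨g, w, hS⟩ := exists_shortExact_seqCycles h le_rfl
  have : Mono (d n) := h.1
  have : IsIso g := hS.isIso_g_iff.2 (isZero_kernel_of_mono _)
  exact ⟨Ω, hΩ, P, hP, hF.of_iso (biprod.mapIso (asIso g) (Iso.refl P))⟩

end ExactSequences

/-- Let `𝒜` be an abelian category with enough projectives and let
`0 → M → X⁰ → X¹ → ⋯ → Xⁿ → 0` be exact (`n ≥ 0`).  Then there are, for `0 ≤ i ≤ n`,
`i`-th syzygies `Ω^i(X^i)` of the `X^i` such that
`M ∈ [Ωⁿ(Xⁿ)]₁ • [Ω^{n-1}(X^{n-1})]₁ • ⋯ • [Ω¹(X¹)]₁ • [X⁰]₁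
   ⊆ [⊕_{i=0}^{n} Ω^i(X^i)]_{n+1}`. -/
theorem mem_bigBullet_of_exactSeq [EnoughProjectives C]
    (n : ℕ) (M : C) (X : ℕ → C)
    (d : ∀ k : ℕ, (fun j => if j ≤ n then X (n - j) else M) (k + 1) ⟶
      (fun j => if j ≤ n then X (n - j) else M) k)
    (h : IsExactSeq (n + 1) (fun j => if j ≤ n then X (n - j) else M) d) :
    ∃ Ω : ℕ → C, (∀ i : ℕ, i ≤ n → IsNthSyzygy i (Ω i) (X i)) ∧
      M ∈ bigBullet (fun i => bracket (Ω i) 1) n ∧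
      bigBullet (fun i => bracket (Ω i) 1) n ⊆
        bracket (⨁ (fun i : Fin (n + 1) => Ω i)) (n + 1) := by
  obtain ⟨Ω, hΩ, P, _, hF⟩ := exists_hasFiltration_of_isExactSeq h
  refine ⟨Ω, fun i hi => ?_, ?_, bigBullet_subset_bracket fun i hi => ?_⟩
  · simpa [Nat.sub_sub_self hi] using hΩ i hi
  · have hM := mem_bigBullet_of_retract ⟨biprod.inl, biprod.fst, by simp⟩
      (mem_bigBullet_of_hasFiltration hF)
    simpa using hM
  · let j : Fin (n + 1) := ⟨i, by omega⟩
    exact mem_addClosure_of_retract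
      ⟨biproduct.ι (fun i : Fin (n + 1) => Ω i) j, biproduct.π _ j, biproduct.ι_π_self _ _⟩
      (mem_addClosure_of_mem rfl)
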